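/- Let k and j be integers with 1 ≤ j ≤ k−1, let V be a set of n vertices, let 1 ≤ i ≤ j−1, let I ⊆ V with |I| = i, and let 𝒢 be a family of j-subsets of V. Then the number of k-subsets K of V such that I ⊆ K and there exists J' ∈ 𝒢 with J' ⊆ K and I ⊄ J' is at most Σ_{z=0}^{i−1} C(i,z)·Δ_z(𝒢)·C(n, k−j−i+z), where by convention C(n,m) = 0 whenever m < 0. -/

import Mathlib

/-- `Δ_z(𝒢)`: the maximum, over all `z`-subsets `Z` of the (finite) vertex set `V`, of the
number of members of `𝒢` containing `Z`. -/
def maxDegree {V : Type*} [Fintype V] [DecidableEq V] (𝒢 : Finset (Finset V)) (z : ℕ) : ℕ :=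
  (Finset.powersetCard z (Finset.univ : Finset V)).sup fun Z =>
    (𝒢.filter fun J => Z ⊆ J).card

/-!
Every counted `K` contains `I ∪ J'` for some `J' ∈ 𝒢` meeting `I` in a proper subset `Z`, of
size `z < i`. The set `I ∪ J'` has `i + j - z` elements, so it lies in at most
`C(n, k + z - j - i)` of the `k`-sets, and for a fixed `z` there are at most `C(i, z) · Δ_z(𝒢)`
such `J'`: choose `Z ⊆ I`, then a member of `𝒢` containing `Z`.
-/

open Finset

section

variable {V : Type*} [DecidableEq V]

lemma card_filter_superset_powersetCard_le (s S : Finset V) (k : ℕ) :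
    #{K ∈ s.powersetCard k | S ⊆ K} ≤ if #S ≤ k then (#s).choose (k - #S) else 0 := by
  split_ifs with hSk
  · rw [← card_powersetCard]
    refine card_le_card_of_injOn (· \ S) (fun K hK => ?_) (fun K₁ hK₁ K₂ hK₂ hK => ?_)
    · simp only [coe_filter, mem_powersetCard, Set.mem_ofPred_eq, mem_coe] at hK ⊢
      exact ⟨sdiff_subset.trans hK.1.1, by rw [card_sdiff_of_subset hK.2, hK.1.2]⟩
    · simp only [coe_filter, mem_powersetCard, Set.mem_ofPred_eq] at hK₁ hK₂
      rw [← sdiff_union_of_subset hK₁.2, ← sdiff_union_of_subset hK₂.2]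
      exact congrArg (· ∪ S) hK
  · refine (card_eq_zero.2 <| filter_eq_empty_iff.2 fun K hK hSK => hSk ?_).le
    exact (card_le_card hSK).trans (mem_powersetCard.1 hK).2.le

lemma card_filter_card_inter_eq_le_choose_mul_maxDegree [Fintype V] (𝒢 : Finset (Finset V))
    (I : Finset V) (z : ℕ) :
    #{J ∈ 𝒢 | #(I ∩ J) = z} ≤ (#I).choose z * maxDegree 𝒢 z := by
  have hcover : {J ∈ 𝒢 | #(I ∩ J) = z} ⊆ (I.powersetCard z).biUnion fun Z => {J ∈ 𝒢 | Z ⊆ J} := by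
    intro J hJ
    rw [mem_filter] at hJ
    exact mem_biUnion.2 ⟨I ∩ J, mem_powersetCard.2 ⟨inter_subset_left, hJ.2⟩,
      mem_filter.2 ⟨hJ.1, inter_subset_right⟩⟩
  rw [← card_powersetCard]
  refine (card_le_card hcover).trans (card_biUnion_le_card_mul _ _ _ fun Z hZ => ?_)
  exact le_sup (f := fun Z => #{J ∈ 𝒢 | Z ⊆ J})
    (mem_powersetCard.2 ⟨subset_univ Z, (mem_powersetCard.1 hZ).2⟩)

end

theorem count_jump_ksets_general
    (k j n i : ℕ)
    {V : Type*} [Fintype V] [DecidableEq V] (hn : Fintype.card V = n)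
    (I : Finset V) (hI : I.card = i)
    (𝒢 : Finset (Finset V)) (h𝒢 : ∀ G ∈ 𝒢, G.card = j) :
    ((Finset.powersetCard k (Finset.univ : Finset V)).filter fun K =>
        I ⊆ K ∧ ∃ J' ∈ 𝒢, J' ⊆ K ∧ ¬ I ⊆ J').card ≤
      ∑ z ∈ Finset.range i, i.choose z * maxDegree 𝒢 z *
        (if j + i ≤ k + z then n.choose (k + z - j - i) else 0) := by
  set g := fun z => if j + i ≤ k + z then n.choose (k + z - j - i) else 0
  set 𝒥 := {J ∈ 𝒢 | ¬ I ⊆ J}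
  have hcover : {K ∈ powersetCard k (univ : Finset V) | I ⊆ K ∧ ∃ J' ∈ 𝒢, J' ⊆ K ∧ ¬ I ⊆ J'} ⊆
      𝒥.biUnion fun J => {K ∈ powersetCard k univ | I ∪ J ⊆ K} := by
    intro K hK
    obtain ⟨hK, hIK, J, hJ, hJK, hIJ⟩ := mem_filter.1 hK
    exact mem_biUnion.2 ⟨J, mem_filter.2 ⟨hJ, hIJ⟩, mem_filter.2 ⟨hK, union_subset hIK hJK⟩⟩
  have hsupersets : ∀ J ∈ 𝒥, #{K ∈ powersetCard k univ | I ∪ J ⊆ K} ≤ g #(I ∩ J) := by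
    intro J hJ
    have hunion := card_union_add_card_inter I J
    rw [hI, h𝒢 J (mem_filter.1 hJ).1] at hunion
    convert card_filter_superset_powersetCard_le univ (I ∪ J) k using 2 <;> grind [card_univ]
  have hinter : ∀ J ∈ 𝒥, #(I ∩ J) ∈ range i := fun J hJ =>
    mem_range.2 (hI ▸ card_lt_card (inf_lt_left.2 (mem_filter.1 hJ).2))
  calc _ ≤ ∑ J ∈ 𝒥, #{K ∈ powersetCard k univ | I ∪ J ⊆ K} :=
        (card_le_card hcover).trans card_biUnion_le
    _ ≤ ∑ J ∈ 𝒥, g #(I ∩ J) := sum_le_sum hsupersets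
    _ = ∑ z ∈ range i, #{J ∈ 𝒥 | #(I ∩ J) = z} * g z := by
        rw [← sum_fiberwise_of_maps_to' hinter]
        simp only [sum_const, smul_eq_mul]
    _ ≤ _ := sum_le_sum fun z _ => Nat.mul_le_mul_right _ <| hI ▸
        (card_le_card (filter_subset_filter _ (filter_subset _ _))).trans
          (card_filter_card_inter_eq_le_choose_mul_maxDegree 𝒢 I z)

theorem count_jump_ksets
    (k j n i : ℕ) (hj1 : 1 ≤ j) (hjk : j + 1 ≤ k) (hi1 : 1 ≤ i) (hij : i ≤ j - 1)
    {V : Type*} [Fintype V] [DecidableEq V] (hn : Fintype.card V = n)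
    (I : Finset V) (hI : I.card = i)
    (𝒢 : Finset (Finset V)) (h𝒢 : ∀ G ∈ 𝒢, G.card = j) :
    ((Finset.powersetCard k (Finset.univ : Finset V)).filter fun K =>
        I ⊆ K ∧ ∃ J' ∈ 𝒢, J' ⊆ K ∧ ¬ I ⊆ J').card ≤
      ∑ z ∈ Finset.range i, i.choose z * maxDegree 𝒢 z *
        (if j + i ≤ k + z then n.choose (k + z - j - i) else 0) :=
  count_jump_ksets_general k j n i hn I hI 𝒢 h𝒢
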